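/- arXiv:1903.07837 — 2 statements merged into one kernel-verified Lean document; each statement's English description precedes it below -/
import Mathlib

section
/- Let M = (Q, n1, n2, ⇒, q0, qf, I) be a two-counter Minsky machine and let (A, R, Rp, A0, ↪) be its APA encoding. If M halts on (n1, n2), i.e., there exist k, m1', m2' ∈ ℕ with ⇒^k((q0, n1, n2)) = (qf, m1', m2'), then the APA state F(A^I ∪ {σQ(qf), σ1(m1'), σ2(m2')}) is reachable in the APA encoding (i.e., it is obtained from the initial state F(A0) by a finite sequence of transitions), and this reachable state has no outgoing transitions. -/
/-- A two-counter Minsky machine over a state type `Q`.  An instruction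
`(q1, i, q2, u)` has source state `q1 ≠ qf`, counter index `i ∈ {1,2}`,
target state `q2` and optional alternative target `u : Option Q`
(`none` playing the role of `ε`). -/
structure Minsky (Q : Type*) where
  n1 : ℕ
  n2 : ℕ
  q0 : Q
  qf : Q
  I : Set (Q × ℕ × Q × Option Q)
  I_idx : ∀ x ∈ I, x.2.1 = 1 ∨ x.2.1 = 2
  I_src : ∀ x ∈ I, x.1 ≠ qf
  I_total : ∀ q : Q, q ≠ qf → ∃ i q2 u, (q, i, q2, u) ∈ I

/-- The one-step relation `⇒` of a two-counter Minsky machine. -/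
inductive Minsky.Step {Q : Type*} (M : Minsky Q) : Q × ℕ × ℕ → Q × ℕ × ℕ → Prop
  | inc1 {q1 q2 : Q} {m1 m2 : ℕ} : (q1, 1, q2, (none : Option Q)) ∈ M.I →
      M.Step (q1, m1, m2) (q2, m1 + 1, m2)
  | inc2 {q1 q2 : Q} {m1 m2 : ℕ} : (q1, 2, q2, (none : Option Q)) ∈ M.I →
      M.Step (q1, m1, m2) (q2, m1, m2 + 1)
  | dec1 {q1 q2 q3 : Q} {m1 m2 : ℕ} : (q1, 1, q2, some q3) ∈ M.I → 0 < m1 →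
      M.Step (q1, m1, m2) (q3, m1 - 1, m2)
  | dec2 {q1 q2 q3 : Q} {m1 m2 : ℕ} : (q1, 2, q2, some q3) ∈ M.I → 0 < m2 →
      M.Step (q1, m1, m2) (q3, m1, m2 - 1)
  | zero1 {q1 q2 q3 : Q} {m2 : ℕ} : (q1, 1, q2, some q3) ∈ M.I →
      M.Step (q1, 0, m2) (q2, 0, m2)
  | zero2 {q1 q2 q3 : Q} {m1 : ℕ} : (q1, 2, q2, some q3) ∈ M.I →
      M.Step (q1, m1, 0) (q2, m1, 0)

/-- `M.StepN k c c'` says `⇒^k(c) = c'`, i.e. `c'` is obtained from `c`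
by exactly `k` Minsky machine steps. -/
def Minsky.StepN {Q : Type*} (M : Minsky Q) : ℕ → Q × ℕ × ℕ → Q × ℕ × ℕ → Prop
  | 0, c, c' => c = c'
  | k + 1, c, c' => ∃ c'', M.Step c c'' ∧ M.StepN k c'' c'

/-- An Abstract Persuasion Argumentation framework over the argument type `α`:
an attack relation `R`, a persuasion relation `Rp ⊆ A × (A ∪ {ε}) × A`
(`none` playing the role of `ε`), and an initial set `A0`.
A state `F(A1)` is identified with the set `A1 ⊆ A` of visible arguments
(since the state is `(A1, R ∩ (A1 × A1))`, a function of `A1`). -/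
structure APA (α : Type*) where
  R : Set (α × α)
  Rp : Set (α × Option α × α)
  A0 : Set α

namespace APA

variable {α : Type*} (F : APA α)

/-- `a1` attacks `a2` in the state `F(A1)`. -/
def Attacks (A1 : Set α) (a1 a2 : α) : Prop :=
  a1 ∈ A1 ∧ a2 ∈ A1 ∧ (a1, a2) ∈ F.R

/-- `Γ^{Ax}_{F(A1)}`: members `(a1, α, a2)` of `Rp` with `a1 ∈ A1`,
`α ∈ {ε} ∪ A1`, and `a1` not attacked in `F(A1)` by any member of `Ax`. -/
def gamma (Ax A1 : Set α) : Set (α × Option α × α) :=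
  {t | t ∈ F.Rp ∧ t.1 ∈ A1 ∧ (∀ a : α, t.2.1 = some a → a ∈ A1) ∧
    ∀ b ∈ Ax, ¬ F.Attacks A1 b t.1}

/-- `neg^{A1}(Γ)`. -/
def neg (A1 : Set α) (Γ : Set (α × Option α × α)) : Set α :=
  {ax | ax ∈ A1 ∧ ∃ a1 ∈ A1, ∃ a2 : α, (a1, some ax, a2) ∈ Γ}

/-- `pos^{A1}(Γ)`. -/
def pos (A1 : Set α) (Γ : Set (α × Option α × α)) : Set α :=
  {a2 | ∃ a1 ∈ A1, ∃ m : Option α, (∀ a : α, m = some a → a ∈ A1) ∧ (a1, m, a2) ∈ Γ}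

/-- The transition `F(A1) ↪^{Ax} F(A2)` effected by the specific nonempty
`Γ ⊆ Γ^{Ax}_{F(A1)}`. -/
def TransVia (Ax : Set α) (Γ : Set (α × Option α × α)) (A1 A2 : Set α) : Prop :=
  Γ.Nonempty ∧ Γ ⊆ F.gamma Ax A1 ∧ A2 = (A1 \ neg A1 Γ) ∪ pos A1 Γ

/-- The transition relation `F(A1) ↪^{Ax} F(A2)`. -/
def Trans (Ax A1 A2 : Set α) : Prop :=
  ∃ Γ : Set (α × Option α × α), F.TransVia Ax Γ A1 A2

/-- A state `F(A1)` is reachable iff it is obtained from the initial state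
`F(A0)` by a finite sequence of transitions (with arbitrary reference sets). -/
def Reachable (A1 : Set α) : Prop :=
  Relation.ReflTransGen (fun X Y => ∃ Ax : Set α, F.Trans Ax X Y) F.A0 A1

end APA

/-- `sigC σ1 σ2 i` is `σi` for `i ∈ {1, 2}`. -/
def sigC {α : Type*} (σ1 σ2 : ℕ → α) (i : ℕ) : ℕ → α :=
  if i = 1 then σ1 else σ2

/-- The persuasion relation of the APA encoding of a Minsky machine `M`. -/
def encRp {Q α : Type*} (M : Minsky Q) (σ1 σ2 : ℕ → α) (σQ : Q → α)
    (σI σIc : M.I → α) : Set (α × Option α × α) :=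
  {t | (∃ x : M.I, t = (σI x, some (σQ x.val.1), σIc x)) ∨
    (∃ x : M.I, ∃ n : ℕ, x.val.2.2.2 = none ∧
      t = (σIc x, some (sigC σ1 σ2 x.val.2.1 n), sigC σ1 σ2 x.val.2.1 (n + 1))) ∨
    (∃ x : M.I, ∃ n : ℕ, 1 ≤ n ∧ (∃ q3 : Q, x.val.2.2.2 = some q3) ∧
      t = (σIc x, some (sigC σ1 σ2 x.val.2.1 n), sigC σ1 σ2 x.val.2.1 (n - 1))) ∨
    (∃ x : M.I, ∃ n : ℕ, x.val.2.2.2 = none ∧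
      t = (sigC σ1 σ2 x.val.2.1 n, some (σIc x), σQ x.val.2.2.1)) ∨
    (∃ x : M.I, ∃ n : ℕ, 1 ≤ n ∧ ∃ q3 : Q, x.val.2.2.2 = some q3 ∧
      t = (sigC σ1 σ2 x.val.2.1 n, some (σIc x), σQ q3)) ∨
    (∃ x : M.I, ∃ q3 : Q, x.val.2.2.2 = some q3 ∧
      t = (sigC σ1 σ2 x.val.2.1 0, some (σIc x), σQ x.val.2.2.1))}

/-- The APA encoding of a two-counter Minsky machine `M`, over the argument
type `α` (playing the role of the class `A` of arguments): injective maps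
`σ1, σ2, σQ, σI, σIc` with pairwise disjoint ranges covering `α`, an empty
attack relation, the persuasion relation `encRp`, and the initial set
`{σ1 n1, σ2 n2, σQ q0} ∪ A^I`. -/
structure Encoding {Q : Type*} (M : Minsky Q) (α : Type*) extends APA α where
  σ1 : ℕ → α
  σ2 : ℕ → α
  σQ : Q → α
  σI : M.I → α
  σIc : M.I → α
  inj1 : Function.Injective σ1
  inj2 : Function.Injective σ2
  injQ : Function.Injective σQ
  injI : Function.Injective σI
  injIc : Function.Injective σIc
  disjoint_ranges : List.Pairwise Disjoint
    [Set.range σ1, Set.range σ2, Set.range σQ, Set.range σI, Set.range σIc]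
  ranges_cover : Set.range σ1 ∪ Set.range σ2 ∪ Set.range σQ ∪
    Set.range σI ∪ Set.range σIc = Set.univ
  R_empty : toAPA.R = ∅
  Rp_spec : toAPA.Rp = encRp M σ1 σ2 σQ σI σIc
  A0_spec : toAPA.A0 = {σ1 M.n1, σ2 M.n2, σQ M.q0} ∪ Set.range σI

/-- The set of visible arguments of the APA state `F(A^I ∪ {σQ q, σ1 m1, σ2 m2})`
corresponding to the Minsky machine configuration `(q, m1, m2)`. -/
def encState {Q α : Type*} {M : Minsky Q} (E : Encoding M α)
    (q : Q) (m1 m2 : ℕ) : Set α :=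
  Set.range E.σI ∪ {E.σQ q, E.σ1 m1, E.σ2 m2}

/-- The set of visible arguments of the intermediate APA state
`F(A^I ∪ {σIc x, σ1 m1, σ2 m2})`. -/
def encStateC {Q α : Type*} {M : Minsky Q} (E : Encoding M α)
    (x : M.I) (m1 m2 : ℕ) : Set α :=
  Set.range E.σI ∪ {E.σIc x, E.σ1 m1, E.σ2 m2}

/-!
A step of `M` by an instruction `x` from state `q` is simulated by two transitions with empty
reference set. First `σI x`, licensed by `σQ q`, persuades `σIc x`, which replaces `σQ q`. Then
`σIc x` and the counter argument `σi n` persuade each other, so that `σi n` is replaced by the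
updated counter and `σIc x` by `σQ` of the next state (for a successful zero test only `σi 0`
persuades, and the counter stays). The result is again an encoded configuration.

In the halting configuration no persuasion applies: each triple of `Rp` either starts at or is
licensed by some `σIc x`, which is absent, or is licensed by `σQ` of the source of an
instruction, which is never `qf`.
-/

namespace APA

variable {α : Type*} (F : APA α)

def Moves (A1 A2 : Set α) : Prop :=
  ∃ Ax : Set α, F.Trans Ax A1 A2

variable {F} {A1 : Set α} {a b c d : α}

theorem neg_singleton (ha : a ∈ A1) (hb : b ∈ A1) :
    neg A1 {(a, some b, c)} = {b} := by
  ext y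
  simp only [neg, Set.mem_ofPred_eq, Set.mem_singleton_iff, Prod.mk.injEq, Option.some.injEq]
  aesop

theorem pos_singleton (ha : a ∈ A1) (hb : b ∈ A1) :
    pos A1 {(a, some b, c)} = {c} := by
  ext y
  simp only [pos, Set.mem_ofPred_eq, Set.mem_singleton_iff, Prod.mk.injEq]
  aesop

theorem neg_pair (ha : a ∈ A1) (hb : b ∈ A1) :
    neg A1 {(a, some b, c), (b, some a, d)} = {b, a} := by
  ext y
  simp only [neg, Set.mem_ofPred_eq, Set.mem_insert_iff, Set.mem_singleton_iff, Prod.mk.injEq,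
    Option.some.injEq]
  aesop

theorem pos_pair (ha : a ∈ A1) (hb : b ∈ A1) :
    pos A1 {(a, some b, c), (b, some a, d)} = {c, d} := by
  ext y
  simp only [pos, Set.mem_ofPred_eq, Set.mem_insert_iff, Set.mem_singleton_iff, Prod.mk.injEq]
  aesop

theorem mem_gamma_empty {t : α × Option α × α} :
    t ∈ F.gamma ∅ A1 ↔ t ∈ F.Rp ∧ t.1 ∈ A1 ∧ ∀ m : α, t.2.1 = some m → m ∈ A1 := by
  simp only [gamma, Set.mem_ofPred_eq, Set.mem_empty_iff_false, false_imp_iff, imp_true_iff,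
    and_true]

theorem moves_singleton {A2 : Set α} (h : (a, some b, c) ∈ F.Rp) (ha : a ∈ A1) (hb : b ∈ A1)
    (hA2 : A1 \ {b} ∪ {c} = A2) :
    F.Moves A1 A2 :=
  ⟨∅, {(a, some b, c)}, Set.singleton_nonempty _, by simp [mem_gamma_empty, *],
    by rw [neg_singleton ha hb, pos_singleton ha hb, hA2]⟩

theorem moves_pair {A2 : Set α} (hab : (a, some b, c) ∈ F.Rp) (hba : (b, some a, d) ∈ F.Rp)
    (ha : a ∈ A1) (hb : b ∈ A1) (hA2 : A1 \ {b, a} ∪ {c, d} = A2) :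
    F.Moves A1 A2 :=
  ⟨∅, {(a, some b, c), (b, some a, d)}, Set.insert_nonempty _ _,
    by simp [Set.insert_subset_iff, mem_gamma_empty, *],
    by rw [neg_pair ha hb, pos_pair ha hb, hA2]⟩

end APA

namespace Encoding

variable {Q α : Type*} {M : Minsky Q} (E : Encoding M α)

theorem ranges_disjoint :
    (∀ a b, E.σ1 a ≠ E.σ2 b) ∧ (∀ a q, E.σ1 a ≠ E.σQ q) ∧ (∀ a x, E.σ1 a ≠ E.σI x) ∧
    (∀ a x, E.σ1 a ≠ E.σIc x) ∧ (∀ a q, E.σ2 a ≠ E.σQ q) ∧ (∀ a x, E.σ2 a ≠ E.σI x) ∧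
    (∀ a x, E.σ2 a ≠ E.σIc x) ∧ (∀ q x, E.σQ q ≠ E.σI x) ∧ (∀ q x, E.σQ q ≠ E.σIc x) ∧
    (∀ x y, E.σI x ≠ E.σIc y) := by
  simpa only [List.pairwise_cons, List.mem_cons, List.not_mem_nil, or_false, forall_eq_or_imp,
    forall_eq, List.Pairwise.nil, and_true, Set.disjoint_range_iff, IsEmpty.forall_iff,
    implies_true, and_assoc] using E.disjoint_ranges

theorem A0_eq_encState : E.A0 = encState E M.q0 M.n1 M.n2 := by
  rw [E.A0_spec, encState, Set.union_comm]
  grind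

theorem encState_sdiff_union (x : M.I) (m1 m2 : ℕ) :
    encState E x.1.1 m1 m2 \ {E.σQ x.1.1} ∪ {E.σIc x} = encStateC E x m1 m2 := by
  ext y
  simp only [encState, encStateC, Set.mem_union, Set.mem_sdiff, Set.mem_insert_iff,
    Set.mem_singleton_iff, Set.mem_range]
  grind [E.ranges_disjoint]

theorem encStateC_sdiff_union (x : M.I) (q : Q) (m1 m2 : ℕ) :
    encStateC E x m1 m2 \ {E.σIc x} ∪ {E.σQ q} = encState E q m1 m2 := by
  ext y
  simp only [encState, encStateC, Set.mem_union, Set.mem_sdiff, Set.mem_insert_iff,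
    Set.mem_singleton_iff, Set.mem_range]
  grind [E.ranges_disjoint]

theorem encStateC_sdiff_union_σ1 (x : M.I) (q : Q) (m1 m1' m2 : ℕ) :
    encStateC E x m1 m2 \ {E.σ1 m1, E.σIc x} ∪ {E.σ1 m1', E.σQ q} = encState E q m1' m2 := by
  ext y
  simp only [encState, encStateC, Set.mem_union, Set.mem_sdiff, Set.mem_insert_iff,
    Set.mem_singleton_iff, Set.mem_range]
  grind [E.ranges_disjoint, E.inj1]

theorem encStateC_sdiff_union_σ2 (x : M.I) (q : Q) (m1 m2 m2' : ℕ) :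
    encStateC E x m1 m2 \ {E.σ2 m2, E.σIc x} ∪ {E.σ2 m2', E.σQ q} = encState E q m1 m2' := by
  ext y
  simp only [encState, encStateC, Set.mem_union, Set.mem_sdiff, Set.mem_insert_iff,
    Set.mem_singleton_iff, Set.mem_range]
  grind [E.ranges_disjoint, E.inj2]

theorem σQ_mem_encState (p q : Q) (m1 m2 : ℕ) : E.σQ p ∈ encState E q m1 m2 ↔ p = q := by
  simp only [encState, Set.mem_union, Set.mem_insert_iff, Set.mem_singleton_iff, Set.mem_range]
  grind [E.ranges_disjoint, E.injQ]

theorem σIc_notMem_encState (x : M.I) (q : Q) (m1 m2 : ℕ) : E.σIc x ∉ encState E q m1 m2 := by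
  simp only [encState, Set.mem_union, Set.mem_insert_iff, Set.mem_singleton_iff, Set.mem_range]
  grind [E.ranges_disjoint]

/-- `σi n`, where `i` is the counter of the instruction `x`. -/
def counterArg (x : M.I) (n : ℕ) : α :=
  sigC E.σ1 E.σ2 x.1.2.1 n

section Rp

variable (x : M.I) (n : ℕ)

theorem mem_Rp_fire : (E.σI x, some (E.σQ x.1.1), E.σIc x) ∈ E.Rp := by
  rw [E.Rp_spec]
  exact Or.inl ⟨x, rfl⟩

theorem mem_Rp_inc (hx : x.1.2.2.2 = none) :
    (E.σIc x, some (E.counterArg x n), E.counterArg x (n + 1)) ∈ E.Rp := by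
  rw [E.Rp_spec]
  exact Or.inr <| Or.inl ⟨x, n, hx, rfl⟩

theorem mem_Rp_dec {q3 : Q} (hx : x.1.2.2.2 = some q3) (hn : 1 ≤ n) :
    (E.σIc x, some (E.counterArg x n), E.counterArg x (n - 1)) ∈ E.Rp := by
  rw [E.Rp_spec]
  exact Or.inr <| Or.inr <| Or.inl ⟨x, n, hn, ⟨q3, hx⟩, rfl⟩

theorem mem_Rp_inc_return (hx : x.1.2.2.2 = none) :
    (E.counterArg x n, some (E.σIc x), E.σQ x.1.2.2.1) ∈ E.Rp := by
  rw [E.Rp_spec]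
  exact Or.inr <| Or.inr <| Or.inr <| Or.inl ⟨x, n, hx, rfl⟩

theorem mem_Rp_dec_return {q3 : Q} (hx : x.1.2.2.2 = some q3) (hn : 1 ≤ n) :
    (E.counterArg x n, some (E.σIc x), E.σQ q3) ∈ E.Rp := by
  rw [E.Rp_spec]
  exact Or.inr <| Or.inr <| Or.inr <| Or.inr <| Or.inl ⟨x, n, hn, q3, hx, rfl⟩

theorem mem_Rp_zero_return {q3 : Q} (hx : x.1.2.2.2 = some q3) :
    (E.counterArg x 0, some (E.σIc x), E.σQ x.1.2.2.1) ∈ E.Rp := by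
  rw [E.Rp_spec]
  exact Or.inr <| Or.inr <| Or.inr <| Or.inr <| Or.inr ⟨x, q3, hx, rfl⟩

end Rp

theorem moves_fire (x : M.I) (m1 m2 : ℕ) :
    E.Moves (encState E x.1.1 m1 m2) (encStateC E x m1 m2) :=
  APA.moves_singleton (E.mem_Rp_fire x) (by simp [encState]) (by simp [encState])
    (E.encState_sdiff_union x m1 m2)

theorem reflTransGen_moves_of_fire {x : M.I} {m1 m2 : ℕ} {A : Set α}
    (h : E.Moves (encStateC E x m1 m2) A) :
    Relation.ReflTransGen E.Moves (encState E x.1.1 m1 m2) A :=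
  .head (E.moves_fire x m1 m2) (.single h)

theorem moves_of_step {c c' : Q × ℕ × ℕ} (h : M.Step c c') :
    Relation.ReflTransGen E.Moves (encState E c.1 c.2.1 c.2.2)
      (encState E c'.1 c'.2.1 c'.2.2) := by
  cases h
  case inc1 hx =>
    refine E.reflTransGen_moves_of_fire (x := ⟨_, hx⟩) ?_
    exact APA.moves_pair (E.mem_Rp_inc ⟨_, hx⟩ _ rfl) (E.mem_Rp_inc_return ⟨_, hx⟩ _ rfl)
      (by simp [encStateC]) (by simp [encStateC, counterArg, sigC])
      (E.encStateC_sdiff_union_σ1 _ _ _ _ _)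
  case inc2 hx =>
    refine E.reflTransGen_moves_of_fire (x := ⟨_, hx⟩) ?_
    exact APA.moves_pair (E.mem_Rp_inc ⟨_, hx⟩ _ rfl) (E.mem_Rp_inc_return ⟨_, hx⟩ _ rfl)
      (by simp [encStateC]) (by simp [encStateC, counterArg, sigC])
      (E.encStateC_sdiff_union_σ2 _ _ _ _ _)
  case dec1 hx hm =>
    refine E.reflTransGen_moves_of_fire (x := ⟨_, hx⟩) ?_
    exact APA.moves_pair (E.mem_Rp_dec ⟨_, hx⟩ _ rfl hm) (E.mem_Rp_dec_return ⟨_, hx⟩ _ rfl hm)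
      (by simp [encStateC]) (by simp [encStateC, counterArg, sigC])
      (E.encStateC_sdiff_union_σ1 _ _ _ _ _)
  case dec2 hx hm =>
    refine E.reflTransGen_moves_of_fire (x := ⟨_, hx⟩) ?_
    exact APA.moves_pair (E.mem_Rp_dec ⟨_, hx⟩ _ rfl hm) (E.mem_Rp_dec_return ⟨_, hx⟩ _ rfl hm)
      (by simp [encStateC]) (by simp [encStateC, counterArg, sigC])
      (E.encStateC_sdiff_union_σ2 _ _ _ _ _)
  case zero1 hx =>
    refine E.reflTransGen_moves_of_fire (x := ⟨_, hx⟩) ?_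
    exact APA.moves_singleton (E.mem_Rp_zero_return ⟨_, hx⟩ rfl)
      (by simp [encStateC, counterArg, sigC]) (by simp [encStateC])
      (E.encStateC_sdiff_union _ _ _ _)
  case zero2 hx =>
    refine E.reflTransGen_moves_of_fire (x := ⟨_, hx⟩) ?_
    exact APA.moves_singleton (E.mem_Rp_zero_return ⟨_, hx⟩ rfl)
      (by simp [encStateC, counterArg, sigC]) (by simp [encStateC])
      (E.encStateC_sdiff_union _ _ _ _)

theorem moves_of_stepN {k : ℕ} {c c' : Q × ℕ × ℕ} (h : M.StepN k c c') :
    Relation.ReflTransGen E.Moves (encState E c.1 c.2.1 c.2.2)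
      (encState E c'.1 c'.2.1 c'.2.2) := by
  induction k generalizing c with
  | zero => rw [show c = c' from h]
  | succ k ih =>
    obtain ⟨c'', hstep, hrest⟩ := h
    exact (E.moves_of_step hstep).trans (ih hrest)

theorem not_trans_encState_qf (m1 m2 : ℕ) (Ax A2 : Set α) :
    ¬ E.Trans Ax (encState E M.qf m1 m2) A2 := by
  rintro ⟨Γ, ⟨t, ht⟩, hΓ, -⟩
  obtain ⟨hRp, hsrc, hmid, -⟩ := hΓ ht
  rw [E.Rp_spec] at hRp
  rcases hRp with ⟨x, rfl⟩ | ⟨x, n, -, rfl⟩ | ⟨x, n, -, -, rfl⟩ | ⟨x, n, -, rfl⟩ |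
    ⟨x, n, -, q3, -, rfl⟩ | ⟨x, q3, -, rfl⟩
  · exact M.I_src x.1 x.2 ((E.σQ_mem_encState ..).1 (hmid _ rfl))
  · exact E.σIc_notMem_encState x _ _ _ hsrc
  · exact E.σIc_notMem_encState x _ _ _ hsrc
  · exact E.σIc_notMem_encState x _ _ _ (hmid _ rfl)
  · exact E.σIc_notMem_encState x _ _ _ (hmid _ rfl)
  · exact E.σIc_notMem_encState x _ _ _ (hmid _ rfl)

end Encoding

theorem halting_configuration_reachable_and_terminal_general {Q α : Type*}
    (M : Minsky Q) (E : Encoding M α) (k m1' m2' : ℕ)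
    (h : M.StepN k (M.q0, M.n1, M.n2) (M.qf, m1', m2')) :
    E.toAPA.Reachable (encState E M.qf m1' m2') ∧
    ∀ Ax A2 : Set α, ¬ E.toAPA.Trans Ax (encState E M.qf m1' m2') A2 := by
  refine ⟨?_, E.not_trans_encState_qf m1' m2'⟩
  rw [APA.Reachable, E.A0_eq_encState]
  exact E.moves_of_stepN h

/-- if `M` halts on `(n1, n2)`, i.e. `⇒^k((q0, n1, n2)) =
(qf, m1', m2')` for some `k, m1', m2'`, then the APA state
`F(A^I ∪ {σQ qf, σ1 m1', σ2 m2'})` is reachable from the initial state `F(A0)`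
and has no outgoing transitions. -/
theorem halting_configuration_reachable_and_terminal {Q α : Type*} [Finite Q]
    (M : Minsky Q) (E : Encoding M α) (k m1' m2' : ℕ)
    (h : M.StepN k (M.q0, M.n1, M.n2) (M.qf, m1', m2')) :
    E.toAPA.Reachable (encState E M.qf m1' m2') ∧
    ∀ Ax A2 : Set α, ¬ E.toAPA.Trans Ax (encState E M.qf m1' m2') A2 :=
  halting_configuration_reachable_and_terminal_general M E k m1' m2' h
end

section
/- Let M = (Q, n1, n2, ⇒, q0, qf, I) be a two-counter Minsky machine and let (A, R, Rp, A0, ↪) be its APA encoding. For every single Minsky machine step (q, m1, m2) ⇒ (q', m1', m2'), there exist exactly two consecutive APA transitions (with respect to any reference set Ax ⊆ A) from F(A^I ∪ {σQ(q), σ1(m1), σ2(m2)}) to F(A^I ∪ {σQ(q'), σ1(m1'), σ2(m2')}), passing through an intermediate state of the form F(A^I ∪ {σIc(x), σ1(m1), σ2(m2)}) for some instruction x ∈ I whose first component is q. -/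
/-! Each instruction `x = (q, i, q₂, u)` owns a token `σIc x`. The first transition fires
`(σI x, σQ q, σIc x)`, trading the state token for the instruction token. The second one fires,
for an increment or a decrement of a positive counter, the two persuasions
`(σIc x, σi n, σi (n ± 1))` and `(σi n, σIc x, σQ q')`, each of which consumes the other's
source; for a zero test it fires `(σi 0, σIc x, σQ q₂)` alone. Since `R = ∅` nothing is ever
blocked, and the disjointness of the five ranges makes the removed arguments exactly the
intended ones. -/

namespace APA

variable {α : Type*} {F : APA α} {Ax A1 T : Set α} {Γ : Set (α × Option α × α)}
  {a b c d : α}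

theorem neg_of_subset_gamma (hΓ : Γ ⊆ F.gamma Ax A1) :
    neg A1 Γ = {b | ∃ a c, (a, some b, c) ∈ Γ} := by
  ext b
  constructor
  · rintro ⟨-, a, -, c, ht⟩
    exact ⟨a, c, ht⟩
  · rintro ⟨a, c, ht⟩
    exact ⟨(hΓ ht).2.2.1 b rfl, a, (hΓ ht).2.1, c, ht⟩

theorem pos_of_subset_gamma (hΓ : Γ ⊆ F.gamma Ax A1) :
    pos A1 Γ = {c | ∃ a m, (a, m, c) ∈ Γ} := by
  ext c
  constructor
  · rintro ⟨a, -, m, -, ht⟩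
    exact ⟨a, m, ht⟩
  · rintro ⟨a, m, ht⟩
    exact ⟨a, (hΓ ht).2.1, m, (hΓ ht).2.2.1, ht⟩

theorem mem_gamma_of_R_eq_empty (hR : F.R = ∅) (h : (a, some b, c) ∈ F.Rp) (ha : a ∈ A1)
    (hb : b ∈ A1) : (a, some b, c) ∈ F.gamma Ax A1 := by
  refine ⟨h, ha, fun b' hb' => Option.some_injective _ hb' ▸ hb, fun _ _ hatt => ?_⟩
  simpa [hR] using hatt.2.2

theorem trans_insert_of_R_eq_empty (hR : F.R = ∅) (h : (a, some b, c) ∈ F.Rp) (ha : a ∈ T)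
    (hb : b ∉ T) : F.Trans Ax (insert b T) (insert c T) := by
  have hΓ : {(a, some b, c)} ⊆ F.gamma Ax (insert b T) :=
    Set.singleton_subset_iff.2 (mem_gamma_of_R_eq_empty hR h (.inr ha) (.inl rfl))
  refine ⟨_, Set.singleton_nonempty _, hΓ, ?_⟩
  rw [neg_of_subset_gamma hΓ, pos_of_subset_gamma hΓ]
  ext x
  simp only [Set.mem_insert_iff, Set.mem_sdiff, Set.mem_union, Set.mem_ofPred_eq,
    Set.mem_singleton_iff, Prod.mk.injEq, Option.some.injEq]
  grind

theorem trans_insert_insert_of_R_eq_empty (hR : F.R = ∅) (h₁ : (a, some b, c) ∈ F.Rp)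
    (h₂ : (b, some a, d) ∈ F.Rp) (ha : a ∉ T) (hb : b ∉ T) :
    F.Trans Ax (insert a (insert b T)) (insert d (insert c T)) := by
  have hΓ : {(a, some b, c), (b, some a, d)} ⊆ F.gamma Ax (insert a (insert b T)) :=
    Set.insert_subset_iff.2 ⟨mem_gamma_of_R_eq_empty hR h₁ (.inl rfl) (.inr (.inl rfl)),
      Set.singleton_subset_iff.2 (mem_gamma_of_R_eq_empty hR h₂ (.inr (.inl rfl)) (.inl rfl))⟩
  refine ⟨_, Set.insert_nonempty _ _, hΓ, ?_⟩
  rw [neg_of_subset_gamma hΓ, pos_of_subset_gamma hΓ]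
  ext x
  simp only [Set.mem_insert_iff, Set.mem_sdiff, Set.mem_union, Set.mem_ofPred_eq,
    Set.mem_singleton_iff, Prod.mk.injEq, Option.some.injEq]
  grind

end APA

namespace Encoding

variable {Q α : Type*} {M : Minsky Q} (E : Encoding M α)

theorem disjoint_ranges' :
    (Disjoint (Set.range E.σ1) (Set.range E.σ2) ∧
      Disjoint (Set.range E.σ1) (Set.range E.σQ) ∧
      Disjoint (Set.range E.σ1) (Set.range E.σI) ∧
      Disjoint (Set.range E.σ1) (Set.range E.σIc)) ∧
    (Disjoint (Set.range E.σ2) (Set.range E.σQ) ∧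
      Disjoint (Set.range E.σ2) (Set.range E.σI) ∧
      Disjoint (Set.range E.σ2) (Set.range E.σIc)) ∧
    (Disjoint (Set.range E.σQ) (Set.range E.σI) ∧
      Disjoint (Set.range E.σQ) (Set.range E.σIc)) ∧
    Disjoint (Set.range E.σI) (Set.range E.σIc) := by
  simpa using E.disjoint_ranges

@[simp] theorem σ1_ne_σ2 (n m : ℕ) : E.σ1 n ≠ E.σ2 m :=
  E.disjoint_ranges'.1.1.ne_of_mem ⟨n, rfl⟩ ⟨m, rfl⟩

@[simp] theorem σ2_ne_σ1 (n m : ℕ) : E.σ2 n ≠ E.σ1 m := (E.σ1_ne_σ2 m n).symm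

@[simp] theorem σI_ne_σ1 (x : M.I) (n : ℕ) : E.σI x ≠ E.σ1 n :=
  (E.disjoint_ranges'.1.2.2.1.ne_of_mem ⟨n, rfl⟩ ⟨x, rfl⟩).symm

@[simp] theorem σI_ne_σ2 (x : M.I) (n : ℕ) : E.σI x ≠ E.σ2 n :=
  (E.disjoint_ranges'.2.1.2.1.ne_of_mem ⟨n, rfl⟩ ⟨x, rfl⟩).symm

@[simp] theorem σI_ne_σQ (x : M.I) (q : Q) : E.σI x ≠ E.σQ q :=
  (E.disjoint_ranges'.2.2.1.1.ne_of_mem ⟨q, rfl⟩ ⟨x, rfl⟩).symm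

@[simp] theorem σI_ne_σIc (x y : M.I) : E.σI x ≠ E.σIc y :=
  E.disjoint_ranges'.2.2.2.ne_of_mem ⟨x, rfl⟩ ⟨y, rfl⟩

@[simp] theorem σQ_ne_σ1 (q : Q) (n : ℕ) : E.σQ q ≠ E.σ1 n :=
  (E.disjoint_ranges'.1.2.1.ne_of_mem ⟨n, rfl⟩ ⟨q, rfl⟩).symm

@[simp] theorem σQ_ne_σ2 (q : Q) (n : ℕ) : E.σQ q ≠ E.σ2 n :=
  (E.disjoint_ranges'.2.1.1.ne_of_mem ⟨n, rfl⟩ ⟨q, rfl⟩).symm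

@[simp] theorem σIc_ne_σ1 (x : M.I) (n : ℕ) : E.σIc x ≠ E.σ1 n :=
  (E.disjoint_ranges'.1.2.2.2.ne_of_mem ⟨n, rfl⟩ ⟨x, rfl⟩).symm

@[simp] theorem σIc_ne_σ2 (x : M.I) (n : ℕ) : E.σIc x ≠ E.σ2 n :=
  (E.disjoint_ranges'.2.1.2.2.ne_of_mem ⟨n, rfl⟩ ⟨x, rfl⟩).symm

@[simp] theorem sigC_one : sigC E.σ1 E.σ2 1 = E.σ1 := if_pos rfl

@[simp] theorem sigC_two : sigC E.σ1 E.σ2 2 = E.σ2 := if_neg (by decide)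

theorem trans_encState_encStateC (Ax : Set α) (x : M.I) (m1 m2 : ℕ) :
    E.Trans Ax (encState E x.val.1 m1 m2) (encStateC E x m1 m2) := by
  have hRp : (E.σI x, some (E.σQ x.val.1), E.σIc x) ∈ E.Rp := by
    rw [E.Rp_spec]
    exact .inl ⟨x, rfl⟩
  simpa only [encState, encStateC, Set.union_insert] using
    APA.trans_insert_of_R_eq_empty (T := Set.range E.σI ∪ {E.σ1 m1, E.σ2 m2}) E.R_empty hRp
      (Set.mem_union_left _ (Set.mem_range_self x)) (by simp)

variable {Ax T : Set α}

theorem trans_of_inc (x : M.I) (hx : x.val.2.2.2 = none) (n : ℕ) (hxT : E.σIc x ∉ T)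
    (hnT : sigC E.σ1 E.σ2 x.val.2.1 n ∉ T) :
    E.Trans Ax (insert (E.σIc x) (insert (sigC E.σ1 E.σ2 x.val.2.1 n) T))
      (insert (E.σQ x.val.2.2.1) (insert (sigC E.σ1 E.σ2 x.val.2.1 (n + 1)) T)) := by
  refine APA.trans_insert_insert_of_R_eq_empty E.R_empty ?_ ?_ hxT hnT <;> rw [E.Rp_spec]
  · exact .inr <| .inl ⟨x, n, hx, rfl⟩
  · exact .inr <| .inr <| .inr <| .inl ⟨x, n, hx, rfl⟩

theorem trans_of_dec (x : M.I) {q3 : Q} (hx : x.val.2.2.2 = some q3) {n : ℕ} (hn : 1 ≤ n)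
    (hxT : E.σIc x ∉ T) (hnT : sigC E.σ1 E.σ2 x.val.2.1 n ∉ T) :
    E.Trans Ax (insert (E.σIc x) (insert (sigC E.σ1 E.σ2 x.val.2.1 n) T))
      (insert (E.σQ q3) (insert (sigC E.σ1 E.σ2 x.val.2.1 (n - 1)) T)) := by
  refine APA.trans_insert_insert_of_R_eq_empty E.R_empty ?_ ?_ hxT hnT <;> rw [E.Rp_spec]
  · exact .inr <| .inr <| .inl ⟨x, n, hn, ⟨q3, hx⟩, rfl⟩
  · exact .inr <| .inr <| .inr <| .inr <| .inl ⟨x, n, hn, q3, hx, rfl⟩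

theorem trans_of_zero (x : M.I) {q3 : Q} (hx : x.val.2.2.2 = some q3) (hxT : E.σIc x ∉ T)
    (h0T : sigC E.σ1 E.σ2 x.val.2.1 0 ∈ T) :
    E.Trans Ax (insert (E.σIc x) T) (insert (E.σQ x.val.2.2.1) T) := by
  refine APA.trans_insert_of_R_eq_empty E.R_empty ?_ h0T hxT
  rw [E.Rp_spec]
  exact .inr <| .inr <| .inr <| .inr <| .inr ⟨x, q3, hx, rfl⟩

theorem exists_trans_encStateC_of_step {q q' : Q} {m1 m2 m1' m2' : ℕ}
    (h : M.Step (q, m1, m2) (q', m1', m2')) (Ax : Set α) :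
    ∃ x : M.I, x.val.1 = q ∧ E.Trans Ax (encStateC E x m1 m2) (encState E q' m1' m2') := by
  cases h with
  | inc1 hx =>
    refine ⟨⟨_, hx⟩, rfl, ?_⟩
    simpa only [encState, encStateC, Set.union_insert, Set.union_singleton, Set.insert_comm,
      sigC_one] using
      E.trans_of_inc ⟨_, hx⟩ (T := Set.range E.σI ∪ {E.σ2 m2}) rfl m1 (by simp) (by simp)
  | inc2 hx =>
    refine ⟨⟨_, hx⟩, rfl, ?_⟩
    simpa only [encState, encStateC, Set.union_insert, Set.union_singleton, Set.insert_comm,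
      sigC_two] using
      E.trans_of_inc ⟨_, hx⟩ (T := Set.range E.σI ∪ {E.σ1 m1}) rfl m2 (by simp) (by simp)
  | dec1 hx hm =>
    refine ⟨⟨_, hx⟩, rfl, ?_⟩
    simpa only [encState, encStateC, Set.union_insert, Set.union_singleton, Set.insert_comm,
      sigC_one] using
      E.trans_of_dec ⟨_, hx⟩ (T := Set.range E.σI ∪ {E.σ2 m2}) rfl hm (by simp) (by simp)
  | dec2 hx hm =>
    refine ⟨⟨_, hx⟩, rfl, ?_⟩
    simpa only [encState, encStateC, Set.union_insert, Set.union_singleton, Set.insert_comm,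
      sigC_two] using
      E.trans_of_dec ⟨_, hx⟩ (T := Set.range E.σI ∪ {E.σ1 m1}) rfl hm (by simp) (by simp)
  | zero1 hx =>
    refine ⟨⟨_, hx⟩, rfl, ?_⟩
    simpa only [encState, encStateC, Set.union_insert] using
      E.trans_of_zero ⟨_, hx⟩ (T := Set.range E.σI ∪ {E.σ1 0, E.σ2 m2}) rfl
        (by simp) (by simp)
  | zero2 hx =>
    refine ⟨⟨_, hx⟩, rfl, ?_⟩
    simpa only [encState, encStateC, Set.union_insert] using
      E.trans_of_zero ⟨_, hx⟩ (T := Set.range E.σI ∪ {E.σ1 m1, E.σ2 0}) rfl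
        (by simp) (by simp)

end Encoding

theorem single_step_two_transitions_general {Q α : Type*}
    (M : Minsky Q) (E : Encoding M α) (q q' : Q) (m1 m2 m1' m2' : ℕ)
    (h : M.Step (q, m1, m2) (q', m1', m2')) (Ax : Set α) :
    ∃ x : M.I, x.val.1 = q ∧
      E.toAPA.Trans Ax (encState E q m1 m2) (encStateC E x m1 m2) ∧
      E.toAPA.Trans Ax (encStateC E x m1 m2) (encState E q' m1' m2') := by
  obtain ⟨x, rfl, hx⟩ := E.exists_trans_encStateC_of_step h Ax
  exact ⟨x, rfl, E.trans_encState_encStateC Ax x m1 m2, hx⟩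

/-- every single Minsky machine step `(q, m1, m2) ⇒ (q', m1', m2')`
is simulated by exactly two consecutive APA transitions (w.r.t. any reference
set) passing through an intermediate state `F(A^I ∪ {σIc x, σ1 m1, σ2 m2})`
for some instruction `x ∈ I` whose first component is `q`. -/
theorem single_step_two_transitions {Q α : Type*} [Finite Q]
    (M : Minsky Q) (E : Encoding M α) (q q' : Q) (m1 m2 m1' m2' : ℕ)
    (h : M.Step (q, m1, m2) (q', m1', m2')) (Ax : Set α) :
    ∃ x : M.I, x.val.1 = q ∧
      E.toAPA.Trans Ax (encState E q m1 m2) (encStateC E x m1 m2) ∧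
      E.toAPA.Trans Ax (encStateC E x m1 m2) (encState E q' m1' m2') :=
  single_step_two_transitions_general M E q q' m1 m2 m1' m2' h Ax
end
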